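/- arXiv:2410.00460 — 6 statements merged into one kernel-verified Lean document; each statement's English description precedes it below -/
import Mathlib

section
/- Let f : [a,b] → ℝ≥0 be continuous and satisfy (1/2) f(t)² ≤ (1/2) f₀² + ∫_a^t g(s) f(s) ds for all t ∈ [a,b], where f₀ ∈ ℝ and g : [a,b] → ℝ is a nonnegative continuous function. Then |f(t)| ≤ |f₀| + ∫_a^t g(s) ds for all t ∈ [a,b]. -/
open MeasureTheory Set intervalIntegral

lemma aux_gronwall (a b : ℝ) (hab : a ≤ b) (f g : ℝ → ℝ) (f0 : ℝ)
    (hf : Continuous f) (hfnn : ∀ t, 0 ≤ f t)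
    (hg : Continuous g) (hgnn : ∀ t, 0 ≤ g t)
    (hineq : ∀ t ∈ Set.Icc a b,
      (1/2) * (f t)^2 ≤ (1/2) * f0^2 + ∫ s in a..t, g s * f s) :
    ∀ t ∈ Set.Icc a b, f t ≤ |f0| + ∫ s in a..t, g s := by
  set G : ℝ → ℝ := fun u => ∫ s in a..u, g s with hGdef
  have hGcont : Continuous G :=
    intervalIntegral.continuous_primitive (fun x y => hg.intervalIntegrable x y) a
  have hGderiv : ∀ u : ℝ, HasDerivAt G (g u) u := by
    intro u
    exact intervalIntegral.integral_hasDerivAt_right (hg.intervalIntegrable a u)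
      (hg.stronglyMeasurableAtFilter _ _) hg.continuousAt
  have hGa : G a = 0 := intervalIntegral.integral_same
  have hFTC : ∀ (c : ℝ) (u : ℝ),
      (∫ s in a..u, g s * (c + G s)) = c * G u + (G u)^2 / 2 := by
    intro c u
    have h1 : ∀ s ∈ Set.uIcc a u,
        HasDerivAt (fun v => c * G v + (G v)^2 / 2) (g s * (c + G s)) s := by
      intro s _
      have hG' := hGderiv s
      have h2 : HasDerivAt (fun v => c * G v + (G v)^2 / 2)
          (c * g s + (↑2 * G s ^ 1 * g s) / 2) s :=
        ((hG'.const_mul c).add ((hG'.pow 2).div_const 2))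
      convert h2 using 1
      push_cast
      ring
    have h2 : IntervalIntegrable (fun s => g s * (c + G s)) volume a u :=
      (hg.mul (continuous_const.add hGcont)).intervalIntegrable a u
    rw [intervalIntegral.integral_eq_sub_of_hasDerivAt h1 h2, hGa]
    ring
  intro t ht
  have hfa : f a ≤ |f0| := by
    have h1 := hineq a ⟨le_refl a, hab⟩
    rw [intervalIntegral.integral_same] at h1
    nlinarith [hfnn a, abs_nonneg f0, sq_abs f0]
  have key : ∀ ε > 0, f t ≤ (|f0| + G t) + ε := by
    intro ε hε
    by_contra hcon
    push_neg at hcon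
    set C : ℝ := |f0| + ε with hC
    set h : ℝ → ℝ := fun u => f u - (C + G u) with hh
    have hhcont : Continuous h := hf.sub (continuous_const.add hGcont)
    have hht : 0 ≤ h t := by show 0 ≤ f t - (C + G t); linarith
    have hha : h a < 0 := by show f a - (C + G a) < 0; rw [hGa]; linarith
    set S : Set ℝ := Set.Icc a t ∩ {u | 0 ≤ h u} with hS
    have hScl : IsClosed S := isClosed_Icc.inter (isClosed_le continuous_const hhcont)
    have hSne : S.Nonempty := ⟨t, ⟨ht.1, le_refl t⟩, hht⟩
    have hSbdd : BddBelow S := ⟨a, fun u hu => hu.1.1⟩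
    set t' : ℝ := sInf S with ht'
    have ht'S : t' ∈ S := hScl.csInf_mem hSne hSbdd
    have ht'Icc : t' ∈ Set.Icc a t := ht'S.1
    have ht'b : t' ∈ Set.Icc a b := ⟨ht'Icc.1, le_trans ht'Icc.2 ht.2⟩
    have hzero : h t' = 0 := by
      rcases eq_or_lt_of_le (show (0:ℝ) ≤ h t' from ht'S.2) with h1 | h1
      · exact h1.symm
      · exfalso
        have hmem : (0:ℝ) ∈ Set.Icc (h a) (h t') := ⟨le_of_lt hha, le_of_lt h1⟩
        obtain ⟨u, huIcc, hu0⟩ :=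
          intermediate_value_Icc ht'Icc.1 hhcont.continuousOn hmem
        have huS : u ∈ S := ⟨⟨huIcc.1, le_trans huIcc.2 ht'Icc.2⟩, le_of_eq hu0.symm⟩
        have : t' ≤ u := csInf_le hSbdd huS
        have : u = t' := le_antisymm huIcc.2 this
        rw [this] at hu0
        linarith
    have hfle : ∀ s ∈ Set.Icc a t', f s ≤ C + G s := by
      intro s hs
      rcases eq_or_lt_of_le hs.2 with h1 | h1
      · have h2 : h s = 0 := by rw [h1]; exact hzero
        have h3 : f s - (C + G s) = 0 := h2
        linarith
      · by_contra hcon2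
        push_neg at hcon2
        have hsS : s ∈ S := ⟨⟨hs.1, le_trans hs.2 ht'Icc.2⟩, by
          show (0:ℝ) ≤ f s - (C + G s); linarith⟩
        have : t' ≤ s := csInf_le hSbdd hsS
        linarith
    have hft' : f t' = C + G t' := by
      have h2 : f t' - (C + G t') = 0 := hzero
      linarith
    have hmono : (∫ s in a..t', g s * f s) ≤ ∫ s in a..t', g s * (C + G s) := by
      apply intervalIntegral.integral_mono_on ht'Icc.1
      · exact (hg.mul hf).intervalIntegrable a t'
      · exact (hg.mul (continuous_const.add hGcont)).intervalIntegrable a t'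
      · intro s hs
        exact mul_le_mul_of_nonneg_left (hfle s hs) (hgnn s)
    have hq := hineq t' ht'b
    rw [hFTC C t'] at hmono
    have hGt'nn : 0 ≤ G t' := by
      rw [hGdef]
      exact intervalIntegral.integral_nonneg ht'Icc.1 (fun s _ => hgnn s)
    nlinarith [abs_nonneg f0, sq_abs f0]
  -- conclude
  have : f t ≤ |f0| + G t := le_of_forall_pos_le_add key
  exact this

/-- Quadratic Gronwall lemma: if `f : [a,b] → ℝ≥0` is continuous and satisfies
`(1/2) f(t)² ≤ (1/2) f₀² + ∫_a^t g(s) f(s) ds` with `g` continuous nonnegative, then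
`|f(t)| ≤ |f₀| + ∫_a^t g(s) ds`. -/
theorem stmt0 (a b : ℝ) (hab : a ≤ b) (f g : ℝ → ℝ) (f0 : ℝ)
    (hf : ContinuousOn f (Set.Icc a b))
    (hfnn : ∀ t ∈ Set.Icc a b, 0 ≤ f t)
    (hg : ContinuousOn g (Set.Icc a b))
    (hgnn : ∀ t ∈ Set.Icc a b, 0 ≤ g t)
    (hineq : ∀ t ∈ Set.Icc a b,
      (1/2) * (f t)^2 ≤ (1/2) * f0^2 + ∫ s in a..t, g s * f s) :
    ∀ t ∈ Set.Icc a b, |f t| ≤ |f0| + ∫ s in a..t, g s := by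
  set fe : ℝ → ℝ := fun u => f (Set.projIcc a b hab u) with hfe
  set ge : ℝ → ℝ := fun u => g (Set.projIcc a b hab u) with hge
  have hfec : Continuous fe := hf.restrict.comp continuous_projIcc
  have hgec : Continuous ge := hg.restrict.comp continuous_projIcc
  have hfeeq : ∀ u ∈ Set.Icc a b, fe u = f u := by
    intro u hu; simp [hfe, Set.projIcc_of_mem hab hu]
  have hgeeq : ∀ u ∈ Set.Icc a b, ge u = g u := by
    intro u hu; simp [hge, Set.projIcc_of_mem hab hu]
  have hfenn : ∀ u, 0 ≤ fe u := fun u => hfnn _ (Set.projIcc a b hab u).2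
  have hgenn : ∀ u, 0 ≤ ge u := fun u => hgnn _ (Set.projIcc a b hab u).2
  have hIeq : ∀ t ∈ Set.Icc a b, (∫ s in a..t, ge s * fe s) = ∫ s in a..t, g s * f s := by
    intro t ht
    apply intervalIntegral.integral_congr
    intro s hs
    have hs' : s ∈ Set.Icc a b := by
      rw [Set.uIcc_of_le ht.1] at hs
      exact ⟨hs.1, le_trans hs.2 ht.2⟩
    show ge s * fe s = g s * f s
    rw [hfeeq s hs', hgeeq s hs']
  have hIeq2 : ∀ t ∈ Set.Icc a b, (∫ s in a..t, ge s) = ∫ s in a..t, g s := by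
    intro t ht
    apply intervalIntegral.integral_congr
    intro s hs
    have hs' : s ∈ Set.Icc a b := by
      rw [Set.uIcc_of_le ht.1] at hs
      exact ⟨hs.1, le_trans hs.2 ht.2⟩
    show ge s = g s
    exact hgeeq s hs'
  have hineq' : ∀ t ∈ Set.Icc a b,
      (1/2) * (fe t)^2 ≤ (1/2) * f0^2 + ∫ s in a..t, ge s * fe s := by
    intro t ht
    rw [hfeeq t ht, hIeq t ht]
    exact hineq t ht
  intro t ht
  have := aux_gronwall a b hab fe ge f0 hfec hfenn hgec hgenn hineq' t ht
  rw [hfeeq t ht, hIeq2 t ht] at this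
  rw [abs_of_nonneg (hfnn t ht)]
  exact this
end

section
/- Let H be a real Hilbert space and A : D(A) ⊆ H → H a self-adjoint operator, and let z : [0,T] → D(A) be a continuously differentiable solution of z'(t) = -A z(t) with z(t) ≠ 0 for all t. Then the function F(t) = ⟨A z(t), z(t)⟩ / ‖z(t)‖² is nonincreasing on [0,T]. -/
open Set
open scoped RealInnerProductSpace

/-- Derivative of `t ↦ ⟪A z t, z t⟫` via the symmetry/slope trick (no differentiability
of `A ∘ z` needed). -/
lemma inner_Az_z_hasDeriv {H : Type*} [NormedAddCommGroup H] [InnerProductSpace ℝ H]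
    (A : H →ₗ[ℝ] H) (hA : LinearMap.IsSymmetric A)
    (T : ℝ) (z : ℝ → H)
    (hz : ∀ t ∈ Set.Icc 0 T, HasDerivWithinAt z (-(A (z t))) (Set.Icc 0 T) t)
    (hz' : ContinuousOn (fun t => A (z t)) (Set.Icc 0 T))
    {t : ℝ} (ht : t ∈ Set.Icc 0 T) :
    HasDerivWithinAt (fun s => ⟪A (z s), z s⟫) (-(2 * ‖A (z t)‖ ^ 2)) (Set.Icc 0 T) t := by
  rw [hasDerivWithinAt_iff_tendsto_slope]
  have h1 : Filter.Tendsto (fun s => A (z s) + A (z t)) (nhdsWithin t (Set.Icc 0 T \ {t}))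
      (nhds (A (z t) + A (z t))) := by
    have := (hz' t ht).mono_left (nhdsWithin_mono t (Set.diff_subset (s := Set.Icc 0 T) (t := {t})))
    exact this.add tendsto_const_nhds
  have h2 : Filter.Tendsto (slope z t) (nhdsWithin t (Set.Icc 0 T \ {t}))
      (nhds (-(A (z t)))) := hasDerivWithinAt_iff_tendsto_slope.mp (hz t ht)
  have key : ∀ s ∈ Set.Icc 0 T \ {t},
      slope (fun s => ⟪A (z s), z s⟫) t s = ⟪A (z s) + A (z t), slope z t s⟫ := by
    intro s hs
    simp only [slope_def_field, slope, vsub_eq_sub, inner_smul_right, inner_add_left,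
      inner_sub_right]
    have e1 : ⟪A (z t), z s⟫ = ⟪A (z s), z t⟫ := by
      rw [hA (z t) (z s), real_inner_comm]
    rw [e1]
    field_simp
    ring
  have hlim : Filter.Tendsto (fun s => ⟪A (z s) + A (z t), slope z t s⟫)
      (nhdsWithin t (Set.Icc 0 T \ {t})) (nhds (-(2 * ‖A (z t)‖ ^ 2))) := by
    have := Filter.Tendsto.inner (𝕜 := ℝ) h1 h2
    convert this using 2
    simp only [inner_neg_right, inner_add_left, real_inner_self_eq_norm_sq]
    ring
  exact hlim.congr' (by
    filter_upwards [self_mem_nhdsWithin] with s hs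
    exact (key s hs).symm)

/-- If `A` is a self-adjoint (symmetric) operator on a real Hilbert space `H` and
`z` is a C¹ solution of `z' = -A z` with `z(t) ≠ 0`, then
`F(t) = ⟪A z(t), z(t)⟫ / ‖z(t)‖²` is nonincreasing on `[0,T]`. -/
theorem stmt2 {H : Type*} [NormedAddCommGroup H] [InnerProductSpace ℝ H]
    (A : H →ₗ[ℝ] H) (hA : LinearMap.IsSymmetric A)
    (T : ℝ) (hT : 0 < T) (z : ℝ → H)
    (hz : ∀ t ∈ Set.Icc 0 T, HasDerivWithinAt z (-(A (z t))) (Set.Icc 0 T) t)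
    (hz' : ContinuousOn (fun t => A (z t)) (Set.Icc 0 T))
    (hzne : ∀ t ∈ Set.Icc 0 T, z t ≠ 0) :
    AntitoneOn (fun t => ⟪A (z t), z t⟫ / ‖z t‖^2) (Set.Icc 0 T) := by
  have hzc : ContinuousOn z (Set.Icc 0 T) := fun t ht => (hz t ht).continuousWithinAt
  -- derivative of the full quotient at interior points
  have hderiv : ∀ x ∈ Set.Ioo 0 T,
      HasDerivAt (fun t => ⟪A (z t), z t⟫ / ‖z t‖^2)
        ((-(2 * ‖A (z x)‖ ^ 2) * ‖z x‖ ^ 2 -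
          ⟪A (z x), z x⟫ * (⟪z x, -(A (z x))⟫ + ⟪-(A (z x)), z x⟫)) / (‖z x‖ ^ 2) ^ 2) x := by
    intro x hx
    have hxI : x ∈ Set.Icc 0 T := Set.Ioo_subset_Icc_self hx
    have hmem : Set.Icc 0 T ∈ nhds x := Icc_mem_nhds hx.1 hx.2
    have hN : HasDerivAt (fun s => ⟪A (z s), z s⟫) (-(2 * ‖A (z x)‖ ^ 2)) x :=
      (inner_Az_z_hasDeriv A hA T z hz hz' hxI).hasDerivAt hmem
    have hzx : HasDerivAt z (-(A (z x))) x := (hz x hxI).hasDerivAt hmem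
    have hD0 : HasDerivAt (fun s => ⟪z s, z s⟫) (⟪z x, -(A (z x))⟫ + ⟪-(A (z x)), z x⟫) x :=
      HasDerivAt.inner ℝ hzx hzx
    have hD : HasDerivAt (fun s => ‖z s‖ ^ 2) (⟪z x, -(A (z x))⟫ + ⟪-(A (z x)), z x⟫) x := by
      have : (fun s => ‖z s‖ ^ 2) = fun s => ⟪z s, z s⟫ := by
        funext s; rw [real_inner_self_eq_norm_sq]
      rw [this]; exact hD0
    have hne : ‖z x‖ ^ 2 ≠ 0 := by
      have := norm_ne_zero_iff.mpr (hzne x hxI)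
      positivity
    exact hN.div hD hne
  apply antitoneOn_of_deriv_nonpos (convex_Icc 0 T)
  · apply ContinuousOn.div
    · exact hz'.inner hzc
    · exact (hzc.norm).pow 2
    · intro t ht
      have := norm_ne_zero_iff.mpr (hzne t ht)
      positivity
  · intro x hx
    rw [interior_Icc] at hx
    exact ((hderiv x hx).differentiableAt).differentiableWithinAt
  · intro x hx
    rw [interior_Icc] at hx
    rw [(hderiv x hx).deriv]
    have hcs := real_inner_mul_inner_self_le (A (z x)) (z x)
    rw [real_inner_self_eq_norm_sq, real_inner_self_eq_norm_sq] at hcs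
    have h1 : ⟪z x, -(A (z x))⟫ = -⟪A (z x), z x⟫ := by
      rw [inner_neg_right, real_inner_comm]
    have h2 : ⟪-(A (z x)), z x⟫ = -⟪A (z x), z x⟫ := by
      rw [inner_neg_left]
    rw [h1, h2]
    apply div_nonpos_of_nonpos_of_nonneg
    · nlinarith [sq_nonneg (‖z x‖), sq_nonneg (‖A (z x)‖)]
    · positivity
end

section
/- Let H be a real Hilbert space, A : D(A) ⊆ H → H self-adjoint, and z : [0,T] → D(A) a C¹ solution of z'(t) = -A z(t) with z(0) ≠ 0. Then ‖z(0)‖ ≤ exp( (⟨A z(0), z(0)⟩ / ‖z(0)‖²) · T ) · ‖z(T)‖. -/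
/-!
Along a solution of `z' = -A z` one has `(‖z‖²)' = -2⟪A z, z⟫` and `⟪A z, z⟫' = -2‖A z‖²`, so by
Cauchy–Schwarz the Rayleigh quotient `F = ⟪A z, z⟫ / ‖z‖² = -(1/2) (log ‖z‖²)'` is nonincreasing
wherever `z ≠ 0`. Hence `F ≤ F 0`, i.e. `exp (2 F(0) t) ‖z t‖²` is nondecreasing, which is the
squared estimate. It also shows that `z` cannot vanish: at a first zero `t₀` the right-hand side
would tend to `0` while bounding `‖z 0‖² > 0` from above.
-/

open Set
open scoped RealInnerProductSpace

section

variable {H : Type*} [NormedAddCommGroup H] [InnerProductSpace ℝ H] {A : H →ₗ[ℝ] H} {z : ℝ → H}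

noncomputable def LinearMap.rayleighQuotient (A : H →ₗ[ℝ] H) (x : H) : ℝ :=
  ⟪A x, x⟫ / ‖x‖ ^ 2

/-- Not a chain rule, since `A` need not be continuous: by symmetry the increment of `⟪A z, z⟫`
is `⟪A (z y), z y - z t⟫ + ⟪z y - z t, A (z t)⟫`, so continuity of `A ∘ z` suffices. -/
theorem hasDerivWithinAt_inner_apply_self {v : H} {s : Set ℝ} {t : ℝ} (hA : A.IsSymmetric)
    (hz : HasDerivWithinAt z v s t) (hAz : ContinuousWithinAt (fun y => A (z y)) s t) :
    HasDerivWithinAt (fun y => ⟪A (z y), z y⟫) (2 * ⟪A (z t), v⟫) s t := by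
  rw [hasDerivWithinAt_iff_tendsto_slope] at hz ⊢
  have hslope : ∀ y, slope (fun y => ⟪A (z y), z y⟫) t y
      = ⟪A (z y), slope z t y⟫ + ⟪slope z t y, A (z t)⟫ := by
    intro y
    have hsymm : ⟪A (z y), z t⟫ = ⟪z y, A (z t)⟫ := hA _ _
    rw [slope_def_module, slope_def_module, real_inner_smul_right, real_inner_smul_left,
      inner_sub_right, inner_sub_left, real_inner_comm (z t) (A (z t)), hsymm]
    ring
  have hlim := ((hAz.mono_left (nhdsWithin_mono _ sdiff_subset)).inner (𝕜 := ℝ) hz).add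
    (hz.inner (𝕜 := ℝ) (tendsto_const_nhds (x := A (z t))))
  beta_reduce at hlim
  rw [real_inner_comm (A (z t)) v, ← two_mul] at hlim
  exact hlim.congr fun y => (hslope y).symm

variable {D : Set ℝ}

theorem monotoneOn_exp_mul_norm_sq (hD : Convex ℝ D)
    (hz : ∀ t ∈ D, HasDerivWithinAt z (-A (z t)) D t) {C : ℝ}
    (hC : ∀ t ∈ D, ⟪A (z t), z t⟫ ≤ C * ‖z t‖ ^ 2) :
    MonotoneOn (fun t => Real.exp (2 * C * t) * ‖z t‖ ^ 2) D := by
  have hderiv : ∀ t ∈ D, HasDerivWithinAt (fun t => Real.exp (2 * C * t) * ‖z t‖ ^ 2)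
      (Real.exp (2 * C * t) * (2 * (C * ‖z t‖ ^ 2 - ⟪A (z t), z t⟫))) D t := by
    intro t ht
    have hexp : HasDerivAt (fun t => Real.exp (2 * C * t)) (Real.exp (2 * C * t) * (2 * C)) t := by
      simpa using ((hasDerivAt_id t).const_mul (2 * C)).exp
    refine (hexp.hasDerivWithinAt.mul (hz t ht).norm_sq).congr_deriv ?_
    rw [inner_neg_right, real_inner_comm]
    ring
  refine monotoneOn_of_hasDerivWithinAt_nonneg hD
    (fun t ht => (hderiv t ht).continuousWithinAt)
    (fun t ht => (hderiv t (interior_subset ht)).mono interior_subset) fun t ht => ?_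
  exact mul_nonneg (Real.exp_pos _).le (by linarith [hC t (interior_subset ht)])

theorem antitoneOn_rayleighQuotient (hA : A.IsSymmetric) (hD : Convex ℝ D)
    (hz : ∀ t ∈ D, HasDerivWithinAt z (-A (z t)) D t)
    (hAz : ContinuousOn (fun t => A (z t)) D) (hz0 : ∀ t ∈ D, z t ≠ 0) :
    AntitoneOn (fun t => A.rayleighQuotient (z t)) D := by
  have hderiv : ∀ t ∈ D, HasDerivWithinAt (fun t => A.rayleighQuotient (z t))
      ((2 * ⟪A (z t), -A (z t)⟫ * ‖z t‖ ^ 2 - ⟪A (z t), z t⟫ * (2 * ⟪z t, -A (z t)⟫))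
        / (‖z t‖ ^ 2) ^ 2) D t := fun t ht =>
    (hasDerivWithinAt_inner_apply_self hA (hz t ht) (hAz t ht)).div (hz t ht).norm_sq
      (pow_ne_zero 2 (norm_ne_zero_iff.mpr (hz0 t ht)))
  refine antitoneOn_of_hasDerivWithinAt_nonpos hD
    (fun t ht => (hderiv t ht).continuousWithinAt)
    (fun t ht => (hderiv t (interior_subset ht)).mono interior_subset) fun t _ => ?_
  have hCS := real_inner_mul_inner_self_le (A (z t)) (z t)
  rw [real_inner_self_eq_norm_sq, real_inner_self_eq_norm_sq] at hCS
  rw [inner_neg_right, inner_neg_right, real_inner_self_eq_norm_sq, real_inner_comm (A (z t))]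
  exact div_nonpos_of_nonpos_of_nonneg (by nlinarith) (by positivity)

theorem monotoneOn_exp_rayleighQuotient_mul_norm_sq (hA : A.IsSymmetric) (hD : Convex ℝ D)
    (hz : ∀ t ∈ D, HasDerivWithinAt z (-A (z t)) D t)
    (hAz : ContinuousOn (fun t => A (z t)) D) (hz0 : ∀ t ∈ D, z t ≠ 0) {a : ℝ} (ha : IsLeast D a) :
    MonotoneOn (fun t => Real.exp (2 * A.rayleighQuotient (z a) * t) * ‖z t‖ ^ 2) D := by
  refine monotoneOn_exp_mul_norm_sq hD hz fun t ht => ?_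
  have hle := antitoneOn_rayleighQuotient hA hD hz hAz hz0 ha.1 ht (ha.2 ht)
  exact (div_le_iff₀ (pow_pos (norm_pos_iff.mpr (hz0 t ht)) 2)).mp hle

theorem ne_zero_on_Icc_of_ne_zero_left (hA : A.IsSymmetric) {a b : ℝ}
    (hz : ∀ t ∈ Icc a b, HasDerivWithinAt z (-A (z t)) (Icc a b) t)
    (hAz : ContinuousOn (fun t => A (z t)) (Icc a b)) (hza : z a ≠ 0) :
    ∀ t ∈ Icc a b, z t ≠ 0 := by
  by_contra! hzero
  have hzc : ContinuousOn z (Icc a b) := fun t ht => (hz t ht).continuousWithinAt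
  set Z := Icc a b ∩ z ⁻¹' {0}
  have hZbdd : BddBelow Z := ⟨a, fun t ht => ht.1.1⟩
  have ht₀ : sInf Z ∈ Z :=
    (hzc.preimage_isClosed_of_isClosed isClosed_Icc isClosed_singleton).csInf_mem hzero hZbdd
  set t₀ := sInf Z
  have hat₀ : a < t₀ := ht₀.1.1.lt_of_ne fun h => hza (h ▸ ht₀.2)
  have hsub : Ico a t₀ ⊆ Icc a b := Ico_subset_Icc_self.trans (Icc_subset_Icc_right ht₀.1.2)
  have hne : ∀ t ∈ Ico a t₀, z t ≠ 0 := fun t ht h0 =>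
    ht.2.not_ge (csInf_le hZbdd ⟨hsub ht, h0⟩)
  set φ := fun t => Real.exp (2 * A.rayleighQuotient (z a) * t) * ‖z t‖ ^ 2
  have hmono : MonotoneOn φ (Ico a t₀) :=
    monotoneOn_exp_rayleighQuotient_mul_norm_sq hA (convex_Ico a t₀)
      (fun t ht => (hz t (hsub ht)).mono hsub) (hAz.mono hsub) hne
      ⟨left_mem_Ico.mpr hat₀, fun _ ht => ht.1⟩
  have hφc : ContinuousOn φ (Icc a b) := by fun_prop
  -- the monotone bound `φ a ≤ φ t` on `[a, t₀)` survives the limit `t → t₀`, where `φ t₀ = 0`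
  have hlim : φ a ≤ φ t₀ :=
    ContinuousWithinAt.closure_le (by rw [closure_Ico hat₀.ne]; exact right_mem_Icc.mpr hat₀.le)
      continuousWithinAt_const ((hφc t₀ ht₀.1).mono hsub)
      fun t ht => hmono (left_mem_Ico.mpr hat₀) ht ht.1
  have hφa : 0 < φ a := by positivity
  have hφt₀ : φ t₀ = 0 := by simp [φ, show z t₀ = 0 from ht₀.2]
  linarith

end

/-- Log-convexity (backward uniqueness) estimate: if `A` is self-adjoint and `z` is a C¹
solution of `z' = -A z` with `z(0) ≠ 0`, then
`‖z(0)‖ ≤ exp((⟪A z(0), z(0)⟫ / ‖z(0)‖²) T) ‖z(T)‖`. -/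
theorem stmt3 {H : Type*} [NormedAddCommGroup H] [InnerProductSpace ℝ H]
    (A : H →ₗ[ℝ] H) (hA : LinearMap.IsSymmetric A)
    (T : ℝ) (hT : 0 < T) (z : ℝ → H)
    (hz : ∀ t ∈ Set.Icc 0 T, HasDerivWithinAt z (-(A (z t))) (Set.Icc 0 T) t)
    (hz' : ContinuousOn (fun t => A (z t)) (Set.Icc 0 T))
    (hz0 : z 0 ≠ 0) :
    ‖z 0‖ ≤ Real.exp ((⟪A (z 0), z 0⟫ / ‖z 0‖^2) * T) * ‖z T‖ := by
  set C := A.rayleighQuotient (z 0)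
  have hmono := monotoneOn_exp_rayleighQuotient_mul_norm_sq hA (convex_Icc 0 T) hz hz'
    (ne_zero_on_Icc_of_ne_zero_left hA hz hz' hz0) (isLeast_Icc hT.le)
  have hsq : ‖z 0‖ ^ 2 ≤ (Real.exp (C * T) * ‖z T‖) ^ 2 :=
    calc ‖z 0‖ ^ 2 = Real.exp (2 * C * 0) * ‖z 0‖ ^ 2 := by simp
      _ ≤ Real.exp (2 * C * T) * ‖z T‖ ^ 2 :=
        hmono (left_mem_Icc.mpr hT.le) (right_mem_Icc.mpr hT.le) hT.le
      _ = (Real.exp (C * T) * ‖z T‖) ^ 2 := by rw [mul_pow, ← Real.exp_nat_mul]; ring_nf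
  exact (pow_le_pow_iff_left₀ (norm_nonneg _) (by positivity) two_ne_zero).mp hsq
end

section
/- Let b > 0 and ε > 0. For u ∈ H²(ℝ⁺) ∩ H¹(ℝ⁺) and v ∈ ℝ with v = √(ε/2)·u(0), define A(u,v) = (-b u' - (bε/2) u'', -b √(ε/2) u'(0)). Then ⟨A(u,v), (u,v)⟩ = (b/2) u(0)² + (bε/2) ∫₀^∞ |u'(x)|² dx ≥ 0, i.e., A is accretive on L²(ℝ⁺) × ℝ. -/
open MeasureTheory Set Filter Topology

/-!
Integrate both terms by parts on `(0, ∞)`; the boundary terms at infinity vanish, and the boundary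
condition `v = √(ε/2) u(0)` makes the term `u(0) u'(0)` coming from `∫ u u''` cancel against the
second component of `A(u,v)`.
-/

section IntegrationByParts

variable {u u' u'' : ℝ → ℝ} {a : ℝ}

theorem integral_Ioi_mul_deriv_self (hu : ∀ x ∈ Ici a, HasDerivAt u (u' x) x)
    (hint : IntegrableOn (fun x => u x * u' x) (Ioi a))
    (hlim : Tendsto (fun x => u x * u x) atTop (𝓝 0)) :
    ∫ x in Ioi a, u x * u' x = -(u a) ^ 2 / 2 := by
  have h : ∫ x in Ioi a, 2 * (u x * u' x) = 0 - u a * u a :=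
    integral_Ioi_of_hasDerivAt_of_tendsto' (f := fun x => u x * u x)
      (fun x hx => ((hu x hx).mul (hu x hx)).congr_deriv (by ring)) (hint.const_mul 2) hlim
  rw [integral_const_mul] at h
  linarith

theorem integral_Ioi_mul_deriv_deriv (hu : ∀ x ∈ Ici a, HasDerivAt u (u' x) x)
    (hu' : ∀ x ∈ Ici a, HasDerivAt u' (u'' x) x)
    (hint : IntegrableOn (fun x => u x * u'' x) (Ioi a))
    (hint' : IntegrableOn (fun x => (u' x) ^ 2) (Ioi a))
    (hlim : Tendsto (fun x => u x * u' x) atTop (𝓝 0)) :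
    ∫ x in Ioi a, u x * u'' x = -(u a * u' a) - ∫ x in Ioi a, (u' x) ^ 2 := by
  have h : ∫ x in Ioi a, ((u' x) ^ 2 + u x * u'' x) = 0 - u a * u' a :=
    integral_Ioi_of_hasDerivAt_of_tendsto' (f := fun x => u x * u' x)
      (fun x hx => ((hu x hx).mul (hu' x hx)).congr_deriv (by ring)) (hint'.add hint) hlim
  rw [integral_add hint' hint] at h
  linarith

end IntegrationByParts

theorem stmt4_general (b ε : ℝ) (hb : 0 < b) (hε : 0 < ε)
    (u u' u'' : ℝ → ℝ)
    (hu' : ∀ x ∈ Set.Ici (0:ℝ), HasDerivAt u (u' x) x)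
    (hu'' : ∀ x ∈ Set.Ici (0:ℝ), HasDerivAt u' (u'' x) x)
    (hI1 : IntegrableOn (fun x => u x * u' x) (Set.Ioi 0))
    (hI2 : IntegrableOn (fun x => u x * u'' x) (Set.Ioi 0))
    (hI3 : IntegrableOn (fun x => (u' x)^2) (Set.Ioi 0))
    (hlim1 : Filter.Tendsto (fun x => u x * u x) Filter.atTop (nhds 0))
    (hlim2 : Filter.Tendsto (fun x => u x * u' x) Filter.atTop (nhds 0))
    (v : ℝ) (hv : v = Real.sqrt (ε/2) * u 0) :
    (∫ x in Set.Ioi (0:ℝ), (-b * u' x - (b*ε/2) * u'' x) * u x)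
        + (-(b * Real.sqrt (ε/2) * u' 0)) * v
      = (b/2) * (u 0)^2 + (b*ε/2) * ∫ x in Set.Ioi (0:ℝ), (u' x)^2 ∧
    0 ≤ (b/2) * (u 0)^2 + (b*ε/2) * ∫ x in Set.Ioi (0:ℝ), (u' x)^2 := by
  have hsplit : ∫ x in Ioi (0:ℝ), (-b * u' x - (b*ε/2) * u'' x) * u x
      = -b * (∫ x in Ioi (0:ℝ), u x * u' x) - (b*ε/2) * ∫ x in Ioi (0:ℝ), u x * u'' x := by
    rw [← integral_const_mul, ← integral_const_mul,
      ← integral_sub (hI1.const_mul _) (hI2.const_mul _)]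
    exact setIntegral_congr_fun measurableSet_Ioi fun x _ => by ring
  have hsqrt : Real.sqrt (ε/2) * Real.sqrt (ε/2) = ε/2 := Real.mul_self_sqrt (by positivity)
  refine ⟨?_, by positivity⟩
  rw [hsplit, integral_Ioi_mul_deriv_self hu' hI1 hlim1,
    integral_Ioi_mul_deriv_deriv hu' hu'' hI2 hI3 hlim2, hv]
  linear_combination (-(b * u' 0 * u 0)) * hsqrt

/-- Accretivity of the advection-diffusion operator with absorbing boundary condition:
for `(u,v)` in the domain (`u ∈ H²(ℝ⁺)`, `v = √(ε/2) u(0)`),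
`⟨A(u,v),(u,v)⟩ = (b/2) u(0)² + (bε/2) ∫₀^∞ |u'|² ≥ 0`. -/
theorem stmt4 (b ε : ℝ) (hb : 0 < b) (hε : 0 < ε)
    (u u' u'' : ℝ → ℝ)
    (hu' : ∀ x ∈ Set.Ici (0:ℝ), HasDerivAt u (u' x) x)
    (hu'' : ∀ x ∈ Set.Ici (0:ℝ), HasDerivAt u' (u'' x) x)
    (hI0 : IntegrableOn (fun x => (u x)^2) (Set.Ioi 0))
    (hI1 : IntegrableOn (fun x => u x * u' x) (Set.Ioi 0))
    (hI2 : IntegrableOn (fun x => u x * u'' x) (Set.Ioi 0))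
    (hI3 : IntegrableOn (fun x => (u' x)^2) (Set.Ioi 0))
    (hlim1 : Filter.Tendsto (fun x => u x * u x) Filter.atTop (nhds 0))
    (hlim2 : Filter.Tendsto (fun x => u x * u' x) Filter.atTop (nhds 0))
    (v : ℝ) (hv : v = Real.sqrt (ε/2) * u 0) :
    (∫ x in Set.Ioi (0:ℝ), (-b * u' x - (b*ε/2) * u'' x) * u x)
        + (-(b * Real.sqrt (ε/2) * u' 0)) * v
      = (b/2) * (u 0)^2 + (b*ε/2) * ∫ x in Set.Ioi (0:ℝ), (u' x)^2 ∧
    0 ≤ (b/2) * (u 0)^2 + (b*ε/2) * ∫ x in Set.Ioi (0:ℝ), (u' x)^2 :=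
  stmt4_general b ε hb hε u u' u'' hu' hu'' hI1 hI2 hI3 hlim1 hlim2 v hv
end

section
/- Consider the explicit finite-difference scheme u_{n+1,i} = u_{n,i} + (bΔt/h)(u_{n,i+1} − u_{n,i}) + (bεΔt/(2h²))(u_{n,i+1} − 2u_{n,i} + u_{n,i−1}) for 1 ≤ i ≤ N−1, with u_{n+1,0} = u_{n,0} + (bΔt/h)(u_{n,1} − u_{n,0}) and u_{n,N} = 0. If bΔt/h + bεΔt/h² ≤ 1, then each u_{n+1,i} is a convex combination of (u_{n,j})_j and the scheme satisfies the maximum principle: min_j u_{0,j} ∧ 0 ≤ u_{n,i} ≤ max_j u_{0,j} ∨ 0 for all n ≥ 0 and 0 ≤ i ≤ N. -/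
open Finset

/-- Under the CFL condition `bΔt/h + bεΔt/h² ≤ 1`, each step of the explicit
finite-difference scheme is a convex combination of the previous values, and the
scheme satisfies the maximum principle
`(minⱼ u_{0,j}) ∧ 0 ≤ u_{n,i} ≤ (maxⱼ u_{0,j}) ∨ 0`. -/
theorem stmt16 (b ε Δt h : ℝ) (hb : 0 < b) (hε : 0 < ε) (hΔt : 0 < Δt) (hh : 0 < h)
    (N : ℕ) (hN : 2 ≤ N) (u : ℕ → ℕ → ℝ)
    (hrec : ∀ n : ℕ, ∀ i : ℕ, 1 ≤ i → i ≤ N - 1 →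
      u (n+1) i = u n i + (b*Δt/h) * (u n (i+1) - u n i)
        + (b*ε*Δt/(2*h^2)) * (u n (i+1) - 2*u n i + u n (i-1)))
    (hrec0 : ∀ n : ℕ, u (n+1) 0 = u n 0 + (b*Δt/h) * (u n 1 - u n 0))
    (hbcN : ∀ n : ℕ, u n N = 0)
    (hCFL : b*Δt/h + b*ε*Δt/h^2 ≤ 1) :
    (∀ n : ℕ, ∀ i ≤ N, ∃ lam : ℕ → ℝ,
      (∀ j, 0 ≤ lam j) ∧
      (∑ j ∈ Finset.range (N+1), lam j) ≤ 1 ∧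
      u (n+1) i = ∑ j ∈ Finset.range (N+1), lam j * u n j) ∧
    (∀ n : ℕ, ∀ i ≤ N,
      min ((Finset.range (N+1)).inf' (Finset.nonempty_range_iff.mpr (Nat.succ_ne_zero N))
          (fun j => u 0 j)) 0 ≤ u n i ∧
      u n i ≤ max ((Finset.range (N+1)).sup' (Finset.nonempty_range_iff.mpr (Nat.succ_ne_zero N))
          (fun j => u 0 j)) 0) := by
  set a := b*Δt/h with ha
  set c := b*ε*Δt/(2*h^2) with hc
  have ha0 : 0 ≤ a := by positivity
  have hc0 : 0 ≤ c := by positivity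
  have hac : a + 2*c ≤ 1 := by
    have h2 : a + 2*c = b*Δt/h + b*ε*Δt/h^2 := by
      rw [ha, hc]; field_simp
    rw [h2]; exact hCFL
  have key : ∀ n : ℕ, ∀ i ≤ N, ∃ lam : ℕ → ℝ,
      (∀ j, 0 ≤ lam j) ∧ (∑ j ∈ Finset.range (N+1), lam j) ≤ 1 ∧
      u (n+1) i = ∑ j ∈ Finset.range (N+1), lam j * u n j := by
    intro n i hi
    rcases eq_or_lt_of_le hi with rfl | hiN
    · exact ⟨fun _ => 0, fun j => le_rfl, by simp, by simp [hbcN]⟩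
    rcases Nat.eq_zero_or_pos i with rfl | hi1
    · refine ⟨fun j => (if j = 0 then 1 - a else 0) + (if j = 1 then a else 0), ?_, ?_, ?_⟩
      · intro j
        have h1 : a ≤ 1 := by nlinarith
        dsimp only
        split_ifs <;> linarith
      · have h0 : (0 : ℕ) ∈ Finset.range (N+1) := by simp
        have h1 : (1 : ℕ) ∈ Finset.range (N+1) := by simp; omega
        rw [Finset.sum_add_distrib, Finset.sum_ite_eq' _ 0, Finset.sum_ite_eq' _ 1,
          if_pos h0, if_pos h1]
        linarith
      · have h0 : (0 : ℕ) ∈ Finset.range (N+1) := by simp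
        have h1 : (1 : ℕ) ∈ Finset.range (N+1) := by simp; omega
        have : ∀ j, ((if j = 0 then 1 - a else 0) + (if j = 1 then a else 0)) * u n j
            = (if j = 0 then (1-a) * u n j else 0) + (if j = 1 then a * u n j else 0) := by
          intro j; split_ifs <;> ring
        beta_reduce
        simp only [this]
        rw [Finset.sum_add_distrib, Finset.sum_ite_eq' _ 0, Finset.sum_ite_eq' _ 1,
          if_pos h0, if_pos h1, hrec0 n]
        ring
    · -- interior: 1 ≤ i ≤ N-1
      have hiN1 : i ≤ N - 1 := by omega
      have hip : i + 1 ∈ Finset.range (N+1) := by simp; omega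
      have him : i - 1 ∈ Finset.range (N+1) := by simp; omega
      have hii : i ∈ Finset.range (N+1) := by simp; omega
      have hne1 : i - 1 ≠ i := by omega
      have hne2 : i - 1 ≠ i + 1 := by omega
      have hne3 : i ≠ i + 1 := by omega
      refine ⟨fun j => (if j = i - 1 then c else 0) + (if j = i then 1 - a - 2*c else 0)
        + (if j = i + 1 then a + c else 0), ?_, ?_, ?_⟩
      · intro j
        dsimp only
        split_ifs <;> linarith
      · rw [Finset.sum_add_distrib, Finset.sum_add_distrib,
          Finset.sum_ite_eq' _ (i-1), Finset.sum_ite_eq' _ i, Finset.sum_ite_eq' _ (i+1),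
          if_pos him, if_pos hii, if_pos hip]
        linarith
      · have hexp : ∀ j, ((if j = i - 1 then c else 0) + (if j = i then 1 - a - 2*c else 0)
            + (if j = i + 1 then a + c else 0)) * u n j
            = (if j = i - 1 then c * u n j else 0) + (if j = i then (1 - a - 2*c) * u n j else 0)
            + (if j = i + 1 then (a + c) * u n j else 0) := by
          intro j
          rcases eq_or_ne j (i-1) with rfl | e1
          · rw [if_pos rfl, if_pos rfl, if_neg hne1, if_neg hne1, if_neg hne2, if_neg hne2]; ring
          · rcases eq_or_ne j i with rfl | e2
            · rw [if_neg e1, if_neg e1, if_pos rfl, if_pos rfl, if_neg hne3, if_neg hne3]; ring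
            · rcases eq_or_ne j (i+1) with rfl | e3
              · rw [if_neg e1, if_neg e1, if_neg e2, if_neg e2, if_pos rfl, if_pos rfl]; ring
              · rw [if_neg e1, if_neg e1, if_neg e2, if_neg e2, if_neg e3, if_neg e3]; ring
        beta_reduce
        simp only [hexp]
        rw [Finset.sum_add_distrib, Finset.sum_add_distrib,
          Finset.sum_ite_eq' _ (i-1), Finset.sum_ite_eq' _ i, Finset.sum_ite_eq' _ (i+1),
          if_pos him, if_pos hii, if_pos hip, hrec n i hi1 hiN1]
        ring
  refine ⟨key, ?_⟩
  set m := min ((Finset.range (N+1)).inf'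
    (Finset.nonempty_range_iff.mpr (Nat.succ_ne_zero N)) (fun j => u 0 j)) 0 with hm
  set M := max ((Finset.range (N+1)).sup'
    (Finset.nonempty_range_iff.mpr (Nat.succ_ne_zero N)) (fun j => u 0 j)) 0 with hM
  have hm0 : m ≤ 0 := min_le_right _ _
  have hM0 : 0 ≤ M := le_max_right _ _
  intro n
  induction n with
  | zero =>
    intro i hi
    have hmem : i ∈ Finset.range (N+1) := by simp; omega
    constructor
    · exact le_trans (min_le_left _ _) (Finset.inf'_le _ hmem)
    · exact le_trans (Finset.le_sup' (fun j => u 0 j) hmem) (le_max_left _ _)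
  | succ n ih =>
    intro i hi
    obtain ⟨lam, hpos, hsum, heq⟩ := key n i hi
    rw [heq]
    constructor
    · have h1 : ∑ j ∈ Finset.range (N+1), lam j * m ≤ ∑ j ∈ Finset.range (N+1), lam j * u n j := by
        apply Finset.sum_le_sum
        intro j hj
        have hjN : j ≤ N := by simp at hj; omega
        exact mul_le_mul_of_nonneg_left (ih j hjN).1 (hpos j)
      have h2 : m ≤ ∑ j ∈ Finset.range (N+1), lam j * m := by
        rw [← Finset.sum_mul]
        calc m = 1 * m := (one_mul m).symm
        _ ≤ (∑ j ∈ Finset.range (N+1), lam j) * m := mul_le_mul_of_nonpos_right hsum hm0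
      linarith
    · have h1 : ∑ j ∈ Finset.range (N+1), lam j * u n j ≤ ∑ j ∈ Finset.range (N+1), lam j * M := by
        apply Finset.sum_le_sum
        intro j hj
        have hjN : j ≤ N := by simp at hj; omega
        exact mul_le_mul_of_nonneg_left (ih j hjN).2 (hpos j)
      have h2 : ∑ j ∈ Finset.range (N+1), lam j * M ≤ M := by
        rw [← Finset.sum_mul]
        calc (∑ j ∈ Finset.range (N+1), lam j) * M ≤ 1 * M :=
          mul_le_mul_of_nonneg_right hsum hM0
        _ = M := one_mul M
      linarith
end

section
/- Let u solve the transport equation ∂ₜu − b∂ₓu = 0 on [0,T]×[0,L] with u(t,L) = 0 and u(0,·) = u⁰ ∈ L²(0,L) extended by zero. Define μ_k(t) = ∫₀^L x^k u(t,x) dx. Then dμ₀/dt = −b u(t,0) and dμ_k/dt = −bk μ_{k−1}(t) for k ≥ 1. Consequently, if T > L/b then ‖u⁰‖²_{L²(0,L)} ≤ C ‖d^{k+1}μ_k/dt^{k+1}‖²_{L²(0,T)} for a constant C depending on b, k. -/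
open MeasureTheory Set intervalIntegral
open Function

/-!
Differentiating `μ_j(t) = ∫₀^L x^j u(t,x) dx` under the integral sign, substituting
`u_t = b u_x` and integrating by parts (the boundary term at `x = L` vanishes) gives
`μ_j' = -b (0^j u(t,0) + j μ_{j-1})`; iterating, `d^{k+1}μ_k/dt^{k+1} = (-b)^{k+1} k! u(t,0)`.

For the observability bound, `w = u²` solves the same transport equation. Integrating `w_t = b w_x`
over the triangle `{b t + x ≤ L}` in both orders, the two contributions of the hypotenuse (a
characteristic) agree after the substitution `x = L - b t`, which leaves
`∫₀^L w(0,x) dx = b ∫₀^{L/b} w(t,0) dt`. Hence `‖u⁰‖² ≤ b ∫₀^T u(t,0)² dt`, and the constant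
is `C = b / (b^{k+1} k!)²`.
-/

section Calculus

variable {a b c d : ℝ}

theorem ContinuousOn.hasDerivWithinAt_integral_Icc {f : ℝ → ℝ} (hf : ContinuousOn f (Icc a b))
    {t : ℝ} (ht : t ∈ Icc a b) :
    HasDerivWithinAt (fun s => ∫ x in a..s, f x) (f t) (Icc a b) t := by
  have : Fact (t ∈ Icc a b) := ⟨ht⟩
  refine integral_hasDerivWithinAt_right ?_
    (hf.stronglyMeasurableAtFilter_nhdsWithin measurableSet_Icc t) (hf t ht)
  exact (hf.mono (Icc_subset_Icc_right ht.2)).intervalIntegrable_of_Icc ht.1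

theorem integral_eq_sub_of_hasDerivWithinAt_Icc {f f' : ℝ → ℝ}
    (hf : ∀ x ∈ Icc a b, HasDerivWithinAt f (f' x) (Icc a b) x)
    (hf' : ContinuousOn f' (Icc a b)) (hc : c ∈ Icc a b) :
    ∫ x in a..c, f' x = f c - f a := by
  have hsub : Icc a c ⊆ Icc a b := Icc_subset_Icc_right hc.2
  refine integral_eq_sub_of_hasDerivAt_of_le hc.1
    (fun x hx => (hf x (hsub hx)).continuousWithinAt.mono hsub)
    (fun x hx => (hf x (hsub (Ioo_subset_Icc_self hx))).hasDerivAt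
      (Icc_mem_nhds hx.1 (hx.2.trans_le hc.2)))
    ((hf'.mono hsub).intervalIntegrable_of_Icc hc.1)

variable {F : ℝ → ℝ → ℝ}

theorem ContinuousOn.continuousOn_intervalIntegral
    (hF : ContinuousOn (uncurry F) (Icc a b ×ˢ Icc c d)) (hcd : c ≤ d) :
    ContinuousOn (fun s => ∫ x in c..d, F s x) (Icc a b) := by
  rcases lt_or_ge b a with hba | hab
  · simp [Icc_eq_empty_of_lt hba]
  -- extend `F` continuously to the plane by clamping both variables to the rectangle
  set G : ℝ → ℝ → ℝ := fun s x => F (projIcc a b hab s) (projIcc c d hcd x)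
  have hG : Continuous (uncurry G) :=
    hF.comp_continuous
      (f := fun p : ℝ × ℝ => ((projIcc a b hab p.1 : ℝ), (projIcc c d hcd p.2 : ℝ)))
      (by fun_prop) fun p => ⟨Subtype.prop _, Subtype.prop _⟩
  refine (continuous_parametric_intervalIntegral_of_continuous' hG c d).continuousOn.congr
    fun s hs => integral_congr fun x hx => ?_
  rw [uIcc_of_le hcd] at hx
  simp [G, projIcc_of_mem _ hs, projIcc_of_mem _ hx]

theorem integral_integral_swap_of_continuousOn (hab : a ≤ b) (hcd : c ≤ d)
    (hF : ContinuousOn (uncurry F) (Icc a b ×ˢ Icc c d)) :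
    ∫ s in a..b, ∫ x in c..d, F s x = ∫ x in c..d, ∫ s in a..b, F s x := by
  have hint : Integrable (uncurry F)
      ((volume.restrict (Ioc a b)).prod (volume.restrict (Ioc c d))) := by
    rw [Measure.prod_restrict, ← Measure.volume_eq_prod]
    exact (hF.integrableOn_compact (isCompact_Icc.prod isCompact_Icc)).mono_set
      (prod_mono Ioc_subset_Icc_self Ioc_subset_Icc_self)
  simp only [integral_of_le hab, integral_of_le hcd]
  exact integral_integral_swap hint

theorem hasDerivWithinAt_intervalIntegral_of_continuousOn {Ft : ℝ → ℝ → ℝ} {t : ℝ}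
    (hcd : c ≤ d) (hF : ContinuousOn (uncurry F) (Icc a b ×ˢ Icc c d))
    (hFt : ContinuousOn (uncurry Ft) (Icc a b ×ˢ Icc c d))
    (hdF : ∀ s ∈ Icc a b, ∀ x ∈ Icc c d,
      HasDerivWithinAt (fun s => F s x) (Ft s x) (Icc a b) s)
    (ht : t ∈ Icc a b) :
    HasDerivWithinAt (fun s => ∫ x in c..d, F s x) (∫ x in c..d, Ft t x) (Icc a b) t := by
  have hrepr : ∀ r ∈ Icc a b,
      ∫ x in c..d, F r x = (∫ x in c..d, F a x) + ∫ s in a..r, ∫ x in c..d, Ft s x := by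
    intro r hr
    have hsec : ∀ s ∈ Icc a b, IntervalIntegrable (F s) volume c d := fun s hs =>
      (hF.uncurry_left s hs).intervalIntegrable_of_Icc hcd
    refine eq_add_of_sub_eq' ?_
    rw [← integral_sub (hsec r hr) (hsec a ⟨le_rfl, hr.1.trans hr.2⟩),
      integral_integral_swap_of_continuousOn hr.1 hcd
        (hFt.mono (prod_mono (Icc_subset_Icc_right hr.2) subset_rfl))]
    refine integral_congr fun x hx => ?_
    rw [uIcc_of_le hcd] at hx
    exact (integral_eq_sub_of_hasDerivWithinAt_Icc (fun s hs => hdF s hs x hx)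
      (hFt.uncurry_right x hx) hr).symm
  exact (((hFt.continuousOn_intervalIntegral hcd).hasDerivWithinAt_integral_Icc ht).const_add
    (∫ x in c..d, F a x)).congr hrepr (hrepr t ht)

end Calculus

section Triangle

variable {b L : ℝ}

theorem sub_mul_mem_Icc (hb : 0 < b) {s : ℝ} (hs : s ∈ Icc 0 (L / b)) : L - b * s ∈ Icc 0 L :=
  ⟨by linarith [(le_div_iff₀' hb).mp hs.2], by nlinarith [hs.1]⟩

theorem sub_div_mem_Icc (hb : 0 < b) {y : ℝ} (hy : y ∈ Icc 0 L) : (L - y) / b ∈ Icc 0 (L / b) :=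
  ⟨div_nonneg (by linarith [hy.2]) hb.le, div_le_div_of_nonneg_right (by linarith [hy.1]) hb.le⟩

theorem integral_integral_swap_triangle (hb : 0 < b) (hL : 0 ≤ L) {f : ℝ → ℝ → ℝ}
    (hf : ContinuousOn (uncurry f) (Icc 0 (L / b) ×ˢ Icc 0 L)) :
    ∫ s in 0..L / b, ∫ y in 0..L - b * s, f s y
      = ∫ y in 0..L, ∫ s in 0..(L - y) / b, f s y := by
  set S : Set (ℝ × ℝ) := {p | b * p.1 + p.2 ≤ L}
  have hint : Integrable (S.indicator (uncurry f))
      ((volume.restrict (Ioc 0 (L / b))).prod (volume.restrict (Ioc 0 L))) := by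
    rw [Measure.prod_restrict, ← Measure.volume_eq_prod]
    refine ((hf.integrableOn_compact (isCompact_Icc.prod isCompact_Icc)).mono_set
      (prod_mono Ioc_subset_Icc_self Ioc_subset_Icc_self)).indicator ?_
    exact (isClosed_le (by fun_prop) continuous_const).measurableSet
  rw [integral_of_le (div_nonneg hL hb.le), integral_of_le hL]
  convert integral_integral_swap (f := fun s y => S.indicator (uncurry f) (s, y)) hint using 1
  · refine setIntegral_congr_fun measurableSet_Ioc fun s hs => ?_
    rw [← intervalIntegral.integral_indicator (sub_mul_mem_Icc hb (Ioc_subset_Icc_self hs)),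
      integral_of_le hL]
    congr 1 with y
    simp [S, indicator_apply, le_sub_iff_add_le']
  · refine setIntegral_congr_fun measurableSet_Ioc fun y hy => ?_
    rw [← intervalIntegral.integral_indicator (sub_div_mem_Icc hb (Ioc_subset_Icc_self hy)),
      integral_of_le (div_nonneg hL hb.le)]
    congr 1 with s
    simp [S, indicator_apply, le_div_iff₀ hb, le_sub_iff_add_le, mul_comm]

theorem integral_eq_mul_integral_comp_sub_mul (hb : b ≠ 0) (g : ℝ → ℝ) :
    ∫ y in 0..L, g y = b * ∫ s in 0..L / b, g (L - b * s) := by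
  rw [integral_comp_sub_mul g hb, mul_div_cancel₀ _ hb, smul_eq_mul, mul_inv_cancel_left₀ hb]
  simp

end Triangle

structure IsTransportSolution (b T L : ℝ) (u ut ux : ℝ → ℝ → ℝ) : Prop where
  continuousOn : ContinuousOn (uncurry u) (Icc 0 T ×ˢ Icc 0 L)
  continuousOn_dt : ContinuousOn (uncurry ut) (Icc 0 T ×ˢ Icc 0 L)
  continuousOn_dx : ContinuousOn (uncurry ux) (Icc 0 T ×ˢ Icc 0 L)
  hasDerivWithinAt_dt : ∀ t ∈ Icc 0 T, ∀ x ∈ Icc 0 L,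
    HasDerivWithinAt (fun s => u s x) (ut t x) (Icc 0 T) t
  hasDerivWithinAt_dx : ∀ t ∈ Icc 0 T, ∀ x ∈ Icc 0 L,
    HasDerivWithinAt (u t) (ux t x) (Icc 0 L) x
  dt_eq : ∀ t ∈ Icc 0 T, ∀ x ∈ Icc 0 L, ut t x = b * ux t x

noncomputable def moment (L : ℝ) (u : ℝ → ℝ → ℝ) (j : ℕ) : ℝ → ℝ :=
  fun t => ∫ x in 0..L, x ^ j * u t x

namespace IsTransportSolution

variable {b T L t : ℝ} {u ut ux : ℝ → ℝ → ℝ}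

theorem mul_self (h : IsTransportSolution b T L u ut ux) :
    IsTransportSolution b T L (fun t x => u t x * u t x) (fun t x => 2 * u t x * ut t x)
      (fun t x => 2 * u t x * ux t x) where
  continuousOn := h.continuousOn.mul h.continuousOn
  continuousOn_dt := (continuousOn_const.mul h.continuousOn).mul h.continuousOn_dt
  continuousOn_dx := (continuousOn_const.mul h.continuousOn).mul h.continuousOn_dx
  hasDerivWithinAt_dt t ht x hx :=
    ((h.hasDerivWithinAt_dt t ht x hx).mul (h.hasDerivWithinAt_dt t ht x hx)).congr_deriv (by ring)
  hasDerivWithinAt_dx t ht x hx :=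
    ((h.hasDerivWithinAt_dx t ht x hx).mul (h.hasDerivWithinAt_dx t ht x hx)).congr_deriv (by ring)
  dt_eq t ht x hx := by rw [h.dt_eq t ht x hx]; ring

-- For `j = 0` the right-hand side is `-(b * u t 0)`: `0 ^ 0 = 1`, and the truncated `j - 1` is
-- multiplied by `j = 0`.
theorem integral_pow_mul_dt (h : IsTransportSolution b T L u ut ux) (hL : 0 ≤ L)
    (hbc : u t L = 0) (ht : t ∈ Icc 0 T) (j : ℕ) :
    ∫ x in 0..L, x ^ j * ut t x = -(b * (0 ^ j * u t 0 + j * moment L u (j - 1) t)) := by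
  have hdx : ∀ x ∈ uIcc 0 L, HasDerivWithinAt (u t) (ux t x) (uIcc 0 L) x := by
    rw [uIcc_of_le hL]
    exact h.hasDerivWithinAt_dx t ht
  have hpow : Continuous fun x : ℝ => (j : ℝ) * x ^ (j - 1) := by fun_prop
  have hparts := integral_mul_deriv_eq_deriv_mul_of_hasDerivWithinAt
    (fun x _ => (hasDerivAt_pow j x).hasDerivWithinAt) hdx (hpow.intervalIntegrable 0 L)
    ((h.continuousOn_dx.uncurry_left t ht).intervalIntegrable_of_Icc hL)
  calc ∫ x in 0..L, x ^ j * ut t x = b * ∫ x in 0..L, x ^ j * ux t x := by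
        rw [← intervalIntegral.integral_const_mul]
        refine integral_congr fun x hx => ?_
        rw [uIcc_of_le hL] at hx
        simp only [h.dt_eq t ht x hx]
        ring
    _ = -(b * (0 ^ j * u t 0 + j * moment L u (j - 1) t)) := by
        simp_rw [hparts, hbc, moment, mul_assoc, intervalIntegral.integral_const_mul]
        ring

theorem hasDerivWithinAt_moment (h : IsTransportSolution b T L u ut ux) (hL : 0 ≤ L)
    (hbc : ∀ t ∈ Icc 0 T, u t L = 0) (j : ℕ) (ht : t ∈ Icc 0 T) :
    HasDerivWithinAt (moment L u j) (-(b * (0 ^ j * u t 0 + j * moment L u (j - 1) t)))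
      (Icc 0 T) t := by
  rw [← h.integral_pow_mul_dt hL (hbc t ht) ht j]
  have hpow : ContinuousOn (fun p : ℝ × ℝ => p.2 ^ j) (Icc 0 T ×ˢ Icc 0 L) := by fun_prop
  exact hasDerivWithinAt_intervalIntegral_of_continuousOn (F := fun s x => x ^ j * u s x)
    (Ft := fun s x => x ^ j * ut s x) hL
    (hpow.mul h.continuousOn) (hpow.mul h.continuousOn_dt)
    (fun s hs x hx => (h.hasDerivWithinAt_dt s hs x hx).const_mul _) ht

theorem iteratedDerivWithin_moment (h : IsTransportSolution b T L u ut ux) (hT : 0 < T)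
    (hL : 0 ≤ L) (hbc : ∀ t ∈ Icc 0 T, u t L = 0) {j k : ℕ} (hjk : j ≤ k)
    (ht : t ∈ Icc 0 T) :
    iteratedDerivWithin j (moment L u k) (Icc 0 T) t
      = (-b) ^ j * k.descFactorial j * moment L u (k - j) t := by
  induction j generalizing t with
  | zero => simp
  | succ j ih =>
    have hjk' : j ≤ k := by omega
    rw [iteratedDerivWithin_succ, derivWithin_congr (fun r hr => ih hjk' hr) (ih hjk' ht),
      ((h.hasDerivWithinAt_moment hL hbc (k - j) ht).const_mul _).derivWithin
        (uniqueDiffOn_Icc hT t ht),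
      zero_pow (by omega : k - j ≠ 0), show k - j - 1 = k - (j + 1) by omega,
      Nat.descFactorial_succ]
    push_cast
    ring

theorem iteratedDerivWithin_succ_moment_self (h : IsTransportSolution b T L u ut ux) (hT : 0 < T)
    (hL : 0 ≤ L) (hbc : ∀ t ∈ Icc 0 T, u t L = 0) (k : ℕ) (ht : t ∈ Icc 0 T) :
    iteratedDerivWithin (k + 1) (moment L u k) (Icc 0 T) t
      = (-b) ^ (k + 1) * k.factorial * u t 0 := by
  rw [iteratedDerivWithin_succ,
    derivWithin_congr (fun r hr => h.iteratedDerivWithin_moment hT hL hbc le_rfl hr)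
      (h.iteratedDerivWithin_moment hT hL hbc le_rfl ht),
    ((h.hasDerivWithinAt_moment hL hbc (k - k) ht).const_mul _).derivWithin
      (uniqueDiffOn_Icc hT t ht)]
  simp only [Nat.sub_self, pow_zero, one_mul, CharP.cast_eq_zero, zero_mul, add_zero,
    Nat.descFactorial_self]
  ring

theorem mul_integral_sub_eq_integral_sub_of_triangle (h : IsTransportSolution b T L u ut ux)
    (hb : 0 < b) (hL : 0 ≤ L) (hTL : L / b ≤ T) :
    b * ∫ s in 0..L / b, (u s (L - b * s) - u s 0)
      = ∫ y in 0..L, (u ((L - y) / b) y - u 0 y) := by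
  have hLb : 0 ≤ L / b := div_nonneg hL hb.le
  have hsub : Icc 0 (L / b) ⊆ Icc 0 T := Icc_subset_Icc_right hTL
  have hinner_y : ∀ s ∈ uIcc 0 (L / b),
      ∫ y in 0..L - b * s, ut s y = b * (u s (L - b * s) - u s 0) := by
    intro s hs
    rw [uIcc_of_le hLb] at hs
    have hsT := hsub hs
    have hfoot := sub_mul_mem_Icc hb hs
    rw [← integral_eq_sub_of_hasDerivWithinAt_Icc (h.hasDerivWithinAt_dx s hsT)
      (h.continuousOn_dx.uncurry_left s hsT) hfoot, ← intervalIntegral.integral_const_mul]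
    refine integral_congr fun y hy => h.dt_eq s hsT y ?_
    rw [uIcc_of_le hfoot.1] at hy
    exact ⟨hy.1, hy.2.trans hfoot.2⟩
  have hinner_s : ∀ y ∈ uIcc 0 L, ∫ s in 0..(L - y) / b, ut s y = u ((L - y) / b) y - u 0 y := by
    intro y hy
    rw [uIcc_of_le hL] at hy
    exact integral_eq_sub_of_hasDerivWithinAt_Icc (fun s hs => h.hasDerivWithinAt_dt s hs y hy)
      (h.continuousOn_dt.uncurry_right y hy) (hsub (sub_div_mem_Icc hb hy))
  rw [← intervalIntegral.integral_const_mul, ← integral_congr hinner_y, ← integral_congr hinner_s]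
  exact integral_integral_swap_triangle hb hL (h.continuousOn_dt.mono (prod_mono hsub subset_rfl))

theorem integral_initial_eq_mul_integral_boundary (h : IsTransportSolution b T L u ut ux)
    (hb : 0 < b) (hL : 0 ≤ L) (hTL : L / b ≤ T) :
    ∫ x in 0..L, u 0 x = b * ∫ t in 0..L / b, u t 0 := by
  have hLb : 0 ≤ L / b := div_nonneg hL hb.le
  have hsub : Icc 0 (L / b) ⊆ Icc 0 T := Icc_subset_Icc_right hTL
  have hbalance := h.mul_integral_sub_eq_integral_sub_of_triangle hb hL hTL
  have hback : ∀ s, (L - (L - b * s)) / b = s := fun s => by field_simp; ring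
  rw [integral_eq_mul_integral_comp_sub_mul (L := L) hb.ne'] at hbalance
  simp only [hback] at hbalance
  have hint_diag : IntervalIntegrable (fun s => u s (L - b * s)) volume 0 (L / b) :=
    (h.continuousOn.comp (by fun_prop : Continuous fun s => (s, L - b * s)).continuousOn
      fun s hs => ⟨hsub hs, sub_mul_mem_Icc hb hs⟩).intervalIntegrable_of_Icc hLb
  have hint_edge : IntervalIntegrable (fun s => u s 0) volume 0 (L / b) :=
    ((h.continuousOn.uncurry_right 0 (left_mem_Icc.mpr hL)).mono hsub).intervalIntegrable_of_Icc
      hLb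
  have hint_init : IntervalIntegrable (fun s => u 0 (L - b * s)) volume 0 (L / b) :=
    ((h.continuousOn.uncurry_left 0 (hsub (left_mem_Icc.mpr hLb))).comp (by fun_prop)
      fun s hs => sub_mul_mem_Icc hb hs).intervalIntegrable_of_Icc hLb
  rw [integral_sub hint_diag hint_edge, integral_sub hint_diag hint_init] at hbalance
  rw [integral_eq_mul_integral_comp_sub_mul (L := L) hb.ne']
  have := mul_left_cancel₀ hb.ne' hbalance
  linarith

theorem integral_sq_initial_le (h : IsTransportSolution b T L u ut ux) (hb : 0 < b) (hL : 0 ≤ L)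
    (hTL : L / b ≤ T) : ∫ x in 0..L, u 0 x ^ 2 ≤ b * ∫ t in 0..T, u t 0 ^ 2 := by
  have hu0 : ContinuousOn (fun t => u t 0 * u t 0) (Icc 0 T) :=
    h.mul_self.continuousOn.uncurry_right 0 (left_mem_Icc.mpr hL)
  simp only [sq]
  rw [h.mul_self.integral_initial_eq_mul_integral_boundary hb hL hTL]
  gcongr
  exact integral_mono_interval le_rfl (div_nonneg hL hb.le) hTL
    (Filter.Eventually.of_forall fun t => mul_self_nonneg _)
    (hu0.intervalIntegrable_of_Icc ((div_nonneg hL hb.le).trans hTL))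

theorem integral_sq_iteratedDerivWithin_succ_moment_self (h : IsTransportSolution b T L u ut ux)
    (hT : 0 < T) (hL : 0 ≤ L) (hbc : ∀ t ∈ Icc 0 T, u t L = 0) (k : ℕ) :
    ∫ t in 0..T, iteratedDerivWithin (k + 1) (moment L u k) (Icc 0 T) t ^ 2
      = (b ^ (k + 1) * k.factorial) ^ 2 * ∫ t in 0..T, u t 0 ^ 2 := by
  have hsq : ((-b) ^ (k + 1)) ^ 2 = (b ^ (k + 1)) ^ 2 := by
    rw [neg_pow, mul_pow, ← pow_mul, (even_two.mul_left _).neg_one_pow, one_mul]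
  rw [← intervalIntegral.integral_const_mul]
  refine integral_congr fun t ht => ?_
  rw [uIcc_of_le hT.le] at ht
  simp only [h.iteratedDerivWithin_succ_moment_self hT hL hbc k ht, mul_pow, hsq]

end IsTransportSolution

/-- Moments of the transport equation: if `u` solves `∂ₜu - b∂ₓu = 0` on `[0,T]×[0,L]`
with `u(t,L) = 0` and `u(0,·) = u⁰` (extended by zero), and
`μ_k(t) = ∫₀^L x^k u(t,x) dx`, then `μ₀' = -b u(t,0)`, `μ_k' = -bk μ_{k-1}` for `k ≥ 1`,
and if `T > L/b` then `‖u⁰‖²_{L²(0,L)} ≤ C ‖d^{k+1}μ_k/dt^{k+1}‖²_{L²(0,T)}` with `C`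
depending only on `b` and `k`. -/
theorem stmt18 (b : ℝ) (hb : 0 < b) (k : ℕ) :
    ∃ C > 0, ∀ (L T : ℝ), 0 < L → 0 < T →
    ∀ (u0 : ℝ → ℝ) (u ut ux : ℝ → ℝ → ℝ),
      (∀ x, x ∉ Set.Icc 0 L → u0 x = 0) →
      IntegrableOn (fun x => (u0 x)^2) (Set.Ioc 0 L) →
      ContinuousOn (fun p : ℝ × ℝ => u p.1 p.2) (Set.Icc 0 T ×ˢ Set.Icc 0 L) →
      ContinuousOn (fun p : ℝ × ℝ => ut p.1 p.2) (Set.Icc 0 T ×ˢ Set.Icc 0 L) →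
      ContinuousOn (fun p : ℝ × ℝ => ux p.1 p.2) (Set.Icc 0 T ×ˢ Set.Icc 0 L) →
      (∀ t ∈ Set.Icc 0 T, ∀ x ∈ Set.Icc 0 L,
        HasDerivWithinAt (fun s => u s x) (ut t x) (Set.Icc 0 T) t) →
      (∀ t ∈ Set.Icc 0 T, ∀ x ∈ Set.Icc 0 L,
        HasDerivWithinAt (fun y => u t y) (ux t x) (Set.Icc 0 L) x) →
      (∀ t ∈ Set.Icc 0 T, ∀ x ∈ Set.Icc 0 L, ut t x - b * ux t x = 0) →
      (∀ t ∈ Set.Icc 0 T, u t L = 0) →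
      (∀ x ∈ Set.Icc 0 L, u 0 x = u0 x) →
      ((∀ t ∈ Set.Icc 0 T,
          HasDerivWithinAt (fun s => ∫ x in (0:ℝ)..L, u s x)
            (-(b * u t 0)) (Set.Icc 0 T) t) ∧
        (∀ j : ℕ, 1 ≤ j → ∀ t ∈ Set.Icc 0 T,
          HasDerivWithinAt (fun s => ∫ x in (0:ℝ)..L, x^j * u s x)
            (-(b * j * ∫ x in (0:ℝ)..L, x^(j-1) * u t x)) (Set.Icc 0 T) t) ∧
        (T > L / b →
          (∫ x in (0:ℝ)..L, (u0 x)^2)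
            ≤ C * ∫ t in (0:ℝ)..T,
                (iteratedDerivWithin (k+1)
                  (fun s => ∫ x in (0:ℝ)..L, x^k * u s x) (Set.Icc 0 T) t)^2)) := by
  refine ⟨b / (b ^ (k + 1) * k.factorial) ^ 2, by positivity, ?_⟩
  intro L T hL hT u0 u ut ux _ _ hu hut hux hdt hdx hpde hbc hic
  have h : IsTransportSolution b T L u ut ux :=
    ⟨hu, hut, hux, hdt, hdx, fun t ht x hx => by linarith [hpde t ht x hx]⟩
  refine ⟨fun t ht => ?_, fun j hj t ht => ?_, fun hTL => ?_⟩
  · have h0 := h.hasDerivWithinAt_moment hL.le hbc 0 ht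
    unfold moment at h0
    simpa using h0
  · have hj' := h.hasDerivWithinAt_moment hL.le hbc j ht
    unfold moment at hj'
    simpa [zero_pow (by omega : j ≠ 0), mul_assoc] using hj'
  calc ∫ x in 0..L, u0 x ^ 2 = ∫ x in 0..L, u 0 x ^ 2 := by
        refine integral_congr fun x hx => ?_
        rw [uIcc_of_le hL.le] at hx
        simp [← hic x hx]
    _ ≤ b * ∫ t in 0..T, u t 0 ^ 2 := h.integral_sq_initial_le hb hL.le hTL.le
    _ = b / (b ^ (k + 1) * k.factorial) ^ 2 * ∫ t in 0..T,
          iteratedDerivWithin (k + 1) (moment L u k) (Icc 0 T) t ^ 2 := by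
        rw [h.integral_sq_iteratedDerivWithin_succ_moment_self hT hL.le hbc k]
        field_simp
end
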